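/- arXiv:1607.01113 — 4 statements merged into one kernel-verified Lean document; each statement's English description precedes it below -/
import Mathlib

section
/- For every q with q > 5 or 0 ≤ q < 3 there exists a constant C_q > 0 such that for every nonnegative measurable g : ℝ³ → ℝ with 0 < ρ < ∞, finite second moment ∫|v|²g(v)dv < ∞, and 0 < T < ∞, one has ρ·(T + |u|²)^{(q−3)/2} ≤ C_q·N_q(g). -/
open MeasureTheory Real Matrix ENNReal

noncomputable section

/-- Velocity/position space `ℝ³`. -/
abbrev E3 : Type := EuclideanSpace ℝ (Fin 3)

/-- The normalized global Maxwellian `μ(v) = (2π)^{-3/2} exp(-|v|²/2)`. -/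
def Mw (v : E3) : ℝ := (2 * π) ^ (-(3 : ℝ) / 2) * Real.exp (-‖v‖ ^ 2 / 2)

/-- Density `ρ = ∫ g dv`. -/
def dens (g : E3 → ℝ) : ℝ := ∫ v, g v

/-- Bulk velocity `u = ρ⁻¹ ∫ v g dv`. -/
def bulk (g : E3 → ℝ) : E3 := (dens g)⁻¹ • ∫ v, g v • v

/-- Temperature `T = (3ρ)⁻¹ ∫ |v-u|² g dv`. -/
def temp (g : E3 → ℝ) : ℝ := (3 * dens g)⁻¹ * ∫ v, ‖v - bulk g‖ ^ 2 * g v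

/-- Stress tensor `Θ = ρ⁻¹ ∫ (v-u)⊗(v-u) g dv`. -/
def stress (g : E3 → ℝ) : Matrix (Fin 3) (Fin 3) ℝ :=
  Matrix.of fun i j => (dens g)⁻¹ * ∫ v, (v - bulk g) i * (v - bulk g) j * g v

/-- Temperature tensor `𝒯_ν = (1-ν) T Id + ν Θ`. -/
def tempTensor (g : E3 → ℝ) (ν : ℝ) : Matrix (Fin 3) (Fin 3) ℝ :=
  ((1 - ν) * temp g) • (1 : Matrix (Fin 3) (Fin 3) ℝ) + ν • stress g

/-- Anisotropic Gaussian `M_ν = ρ det(2π𝒯_ν)^{-1/2} exp(-½ (v-u)ᵀ𝒯_ν⁻¹(v-u))`. -/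
def aGauss (g : E3 → ℝ) (ν : ℝ) (v : E3) : ℝ :=
  dens g / Real.sqrt (((2 * π) • tempTensor g ν).det) *
    Real.exp (-(1 / 2) *
      ((fun i => (v - bulk g) i) ⬝ᵥ ((tempTensor g ν)⁻¹ *ᵥ fun i => (v - bulk g) i)))

/-- Collision frequency `A_ν = ρT/(1-ν)`. -/
def collFreq (g : E3 → ℝ) (ν : ℝ) : ℝ := dens g * temp g / (1 - ν)

/-- Weighted sup-norm `‖w f‖_{L^∞} = sup_{x,v} (1+|v|)^β f(x,v)`. -/
def wSup (β : ℝ) (f : E3 → E3 → ℝ) : ℝ :=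
  ⨆ p : E3 × E3, (1 + ‖p.2‖) ^ β * f p.1 p.2

/-- Finiteness of the weighted sup-norm. -/
def WBdd (β : ℝ) (f : E3 → E3 → ℝ) : Prop :=
  BddAbove (Set.range fun p : E3 × E3 => (1 + ‖p.2‖) ^ β * f p.1 p.2)

/-- A (global-in-time) mild solution of the ES-BGK equation
`∂ₜF + v·∇ₓF = A_ν (M_ν - F)` with initial datum `F₀`. -/
structure IsMildSolution (ν β : ℝ) (F₀ : E3 → E3 → ℝ) (F : ℝ → E3 → E3 → ℝ) : Prop where
  nonneg : ∀ t, 0 ≤ t → ∀ x v, 0 ≤ F t x v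
  meas : ∀ t, 0 ≤ t → Measurable fun p : E3 × E3 => F t p.1 p.2
  integrable : ∀ t, 0 ≤ t → ∀ x, Integrable (F t x)
  moment2 : ∀ t, 0 ≤ t → ∀ x, Integrable fun v => ‖v‖ ^ 2 * F t x v
  dens_pos : ∀ t, 0 ≤ t → ∀ x, 0 < dens (F t x)
  temp_pos : ∀ t, 0 ≤ t → ∀ x, 0 < temp (F t x)
  wnorm_bdd : ∀ t, 0 ≤ t → WBdd β (F t)
  wnorm_cont : ContinuousOn (fun t => wSup β (F t)) (Set.Ici 0)
  mild : ∀ t, 0 ≤ t → ∀ x v,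
    F t x v = F₀ (x - t • v) v *
        Real.exp (-(∫ τ in (0 : ℝ)..t, collFreq (F τ (x - (t - τ) • v)) ν))
      + ∫ s in (0 : ℝ)..t,
          Real.exp (-(∫ τ in s..t, collFreq (F τ (x - (t - τ) • v)) ν)) *
            collFreq (F s (x - (t - s) • v)) ν * aGauss (F s (x - (t - s) • v)) ν v

/-- The entropy functional `ℰ(F₀)`. -/
def entE (F₀ : E3 → E3 → ℝ) : ℝ :=
  (∫ p : E3 × E3, (F₀ p.1 p.2 * Real.log (F₀ p.1 p.2) - Mw p.2 * Real.log (Mw p.2)))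
    + (3 / 2 * Real.log (2 * π) - 1) * (∫ p : E3 × E3, (F₀ p.1 p.2 - Mw p.2))
    + 1 / 2 * ∫ p : E3 × E3, ‖p.2‖ ^ 2 * (F₀ p.1 p.2 - Mw p.2)

/-- Componentwise absolute value of `∫ (1, v, |v|², v⊗v) (f - μ) dv`. -/
def momentGap (f : E3 → ℝ) : ℝ :=
  |∫ v, (f v - Mw v)| ⊔ (⨆ i : Fin 3, |∫ v, v i * (f v - Mw v)|) ⊔
    |∫ v, ‖v‖ ^ 2 * (f v - Mw v)| ⊔
    ⨆ ij : Fin 3 × Fin 3, |∫ v, v ij.1 * v ij.2 * (f v - Mw v)|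

/-- `N_q(g) = sup_v (1+|v|)^q g(v)`, valued in `ℝ≥0∞`. -/
def Nq (q : ℝ) (g : E3 → ℝ) : ℝ≥0∞ :=
  ⨆ v : E3, ENNReal.ofReal ((1 + ‖v‖) ^ q * g v)

end

/-!
Let `m = ∫ |v|² g / ρ`; in `ℝ³` this is `3T + |u|²`, comparable to `T + |u|²`. If
`g ≤ M (1 + |v|)^{-q}`, polar coordinates in `ℝᵈ` bound the mass of `g` in the ball of radius `R`
by `M R^{d-q}` when `q < d`, and its second moment outside that ball by `M R^{d+2-q}` when
`q > d + 2`. For `q < d` take `R² = 2m`: by Chebyshev at least half of the mass lies in the ball,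
so `ρ ≲ M m^{(d-q)/2}`. For `q > d + 2` take `R² = m / 2`: the ball carries at most half of the
second moment `ρ m`, so `ρ m ≲ M m^{(d+2-q)/2}`.
-/

open Metric Set

local notation "dim" => Module.finrank ℝ

lemma pow_mul_one_add_rpow_neg_le {y q : ℝ} (n : ℕ) (hy : 0 < y) (hq : 0 ≤ q) :
    y ^ n * (1 + y) ^ (-q) ≤ y ^ ((n : ℝ) - q) := by
  rw [Real.rpow_sub hy, Real.rpow_natCast, div_eq_mul_inv, ← Real.rpow_neg hy.le]
  exact mul_le_mul_of_nonneg_left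
    (Real.rpow_le_rpow_of_nonpos hy (by linarith) (by linarith)) (by positivity)

section Radial

variable {E : Type*} [NormedAddCommGroup E] [NormedSpace ℝ E] [Nontrivial E]
  [FiniteDimensional ℝ E] [MeasurableSpace E] [BorelSpace E] (μ : Measure E) [μ.IsAddHaarMeasure]

lemma toSphere_real_univ_pos : 0 < μ.toSphere.real univ := by
  rw [measureReal_def, μ.toSphere_apply_univ, ENNReal.toReal_mul]
  exact mul_pos (by simp [Module.finrank_pos]) <|
    ENNReal.toReal_pos (measure_ball_pos μ 0 one_pos).ne' measure_ball_lt_top.ne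

lemma setIntegral_preimage_norm_fun_norm (f : ℝ → ℝ) {s : Set ℝ} (hs : MeasurableSet s) :
    ∫ x in (‖·‖) ⁻¹' s, f ‖x‖ ∂μ =
      μ.toSphere.real univ * ∫ y in Ioi 0 ∩ s, y ^ (dim E - 1) * f y := by
  have hsphere : μ.toSphere.real univ = dim E * μ.real (ball 0 1) := by
    simp [measureReal_def, μ.toSphere_apply_univ, ENNReal.toReal_mul]
  rw [← integral_indicator (hs.preimage measurable_norm), ← setIntegral_indicator hs]
  have hind : ((‖·‖) ⁻¹' s).indicator (fun x : E => f ‖x‖) = fun x => s.indicator f ‖x‖ :=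
    funext fun x => indicator_comp_right (fun x : E => ‖x‖) (g := f) (s := s)
  rw [hind, integral_fun_norm_addHaar μ (s.indicator f), hsphere]
  simp only [nsmul_eq_mul, smul_eq_mul, indicator_mul_right, mul_assoc]

lemma setIntegral_ball_one_add_norm_rpow_neg_le {q R : ℝ} (hq0 : 0 ≤ q) (hq : q < dim E)
    (hR : 0 < R) :
    ∫ x in ball 0 R, (1 + ‖x‖) ^ (-q) ∂μ ≤
      μ.toSphere.real univ * (R ^ ((dim E : ℝ) - q) / (dim E - q)) := by
  have hball : ball (0 : E) R = (‖·‖) ⁻¹' Iio R := by ext; simp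
  have hd : ((dim E - 1 : ℕ) : ℝ) = dim E - 1 := by
    rw [Nat.cast_sub Module.finrank_pos, Nat.cast_one]
  rw [hball, setIntegral_preimage_norm_fun_norm μ (fun y => (1 + y) ^ (-q)) measurableSet_Iio,
    Ioi_inter_Iio]
  refine mul_le_mul_of_nonneg_left ?_ measureReal_nonneg
  calc ∫ y in Ioo 0 R, y ^ (dim E - 1) * (1 + y) ^ (-q)
      ≤ ∫ y in Ioo 0 R, y ^ ((dim E : ℝ) - 1 - q) := by
        refine setIntegral_mono_of_nonneg (fun y hy => by have := hy.1; positivity)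
          (fun y hy => hd ▸ pow_mul_one_add_rpow_neg_le _ hy.1 hq0) ?_
        exact (intervalIntegral.intervalIntegrable_rpow' (by linarith)).1.mono_set
          Ioo_subset_Ioc_self
    _ = R ^ ((dim E : ℝ) - q) / (dim E - q) := by
        rw [← integral_Ioc_eq_integral_Ioo, ← intervalIntegral.integral_of_le hR.le,
          integral_rpow (Or.inl (by linarith)), Real.zero_rpow (by linarith)]
        ring_nf

lemma setIntegral_compl_ball_norm_sq_mul_one_add_norm_rpow_neg_le {q R : ℝ}
    (hq : dim E + 2 < q) (hR : 0 < R) :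
    ∫ x in (ball 0 R)ᶜ, ‖x‖ ^ 2 * (1 + ‖x‖) ^ (-q) ∂μ ≤
      μ.toSphere.real univ * (R ^ ((dim E : ℝ) + 2 - q) / (q - dim E - 2)) := by
  have hball : (ball (0 : E) R)ᶜ = (‖·‖) ⁻¹' Ici R := by ext; simp
  have hd : ((dim E - 1 + 2 : ℕ) : ℝ) = dim E + 1 := by
    rw [Nat.cast_add, Nat.cast_sub Module.finrank_pos]; ring
  rw [hball, setIntegral_preimage_norm_fun_norm μ (fun y => y ^ 2 * (1 + y) ^ (-q))
    measurableSet_Ici, inter_eq_right.2 (Ici_subset_Ioi.2 hR), integral_Ici_eq_integral_Ioi]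
  refine mul_le_mul_of_nonneg_left ?_ measureReal_nonneg
  calc ∫ y in Ioi R, y ^ (dim E - 1) * (y ^ 2 * (1 + y) ^ (-q))
      ≤ ∫ y in Ioi R, y ^ ((dim E : ℝ) + 1 - q) := by
        refine setIntegral_mono_of_nonneg
          (fun y (hy : R < y) => by have := hR.trans hy; positivity)
          (fun y (hy : R < y) => ?_) (integrableOn_Ioi_rpow_of_lt (by linarith) hR)
        rw [← mul_assoc, ← pow_add, ← hd]
        exact pow_mul_one_add_rpow_neg_le _ (hR.trans hy)
          (by linarith [(dim E).cast_nonneg (α := ℝ)])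
    _ = R ^ ((dim E : ℝ) + 2 - q) / (q - dim E - 2) := by
        rw [integral_Ioi_rpow_of_lt (by linarith) hR, neg_div, ← div_neg]
        ring_nf

end Radial

section Chebyshev

variable {E : Type*} [NormedAddCommGroup E] [MeasurableSpace E] {μ : Measure E} {g : E → ℝ}
  {R : ℝ}

lemma setIntegral_compl_ball_le_div_sq (hg0 : 0 ≤ g)
    (hg2 : Integrable (fun v => ‖v‖ ^ 2 * g v) μ) (hR : 0 < R) :
    ∫ v in (ball 0 R)ᶜ, g v ∂μ ≤ (∫ v, ‖v‖ ^ 2 * g v ∂μ) / R ^ 2 := by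
  calc ∫ v in (ball 0 R)ᶜ, g v ∂μ ≤ ∫ v in (ball 0 R)ᶜ, ‖v‖ ^ 2 * g v / R ^ 2 ∂μ := by
        refine setIntegral_mono_of_nonneg (fun v _ => hg0 v) (fun v hv => ?_)
          (hg2.div_const _).integrableOn
        have hRv : R ≤ ‖v‖ := by simpa using hv
        rw [le_div_iff₀ (by positivity), mul_comm]
        exact mul_le_mul_of_nonneg_right (pow_le_pow_left₀ hR.le hRv 2) (hg0 v)
    _ ≤ (∫ v, ‖v‖ ^ 2 * g v ∂μ) / R ^ 2 := by
        rw [integral_div]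
        exact div_le_div_of_nonneg_right
          (setIntegral_le_integral hg2 (.of_forall fun v => mul_nonneg (by positivity) (hg0 v)))
          (by positivity)

lemma setIntegral_ball_norm_sq_mul_le (hg0 : 0 ≤ g) (hg : Integrable g μ) :
    ∫ v in ball 0 R, ‖v‖ ^ 2 * g v ∂μ ≤ R ^ 2 * ∫ v, g v ∂μ := by
  calc ∫ v in ball 0 R, ‖v‖ ^ 2 * g v ∂μ ≤ ∫ v in ball 0 R, R ^ 2 * g v ∂μ := by
        refine setIntegral_mono_of_nonneg (fun v _ => mul_nonneg (by positivity) (hg0 v))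
          (fun v hv => ?_) (hg.const_mul _).integrableOn
        have hvR : ‖v‖ < R := by simpa using hv
        exact mul_le_mul_of_nonneg_right (pow_le_pow_left₀ (norm_nonneg v) hvR.le 2) (hg0 v)
    _ ≤ R ^ 2 * ∫ v, g v ∂μ := by
        rw [integral_const_mul]
        exact mul_le_mul_of_nonneg_left (setIntegral_le_integral hg (.of_forall hg0))
          (by positivity)

end Chebyshev

section WeightedBounds

variable {E : Type*} [NormedAddCommGroup E] [NormedSpace ℝ E] [Nontrivial E]
  [FiniteDimensional ℝ E] [MeasurableSpace E] [BorelSpace E] {μ : Measure E}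
  [μ.IsAddHaarMeasure] {g : E → ℝ} {q M R : ℝ}

lemma integral_le_of_le_mul_one_add_norm_rpow_neg (hq0 : 0 ≤ q) (hq : q < dim E) (hR : 0 < R)
    (hg0 : 0 ≤ g) (hg : Integrable g μ) (hg2 : Integrable (fun v => ‖v‖ ^ 2 * g v) μ)
    (hM : 0 ≤ M) (hgM : ∀ v, g v ≤ M * (1 + ‖v‖) ^ (-q)) :
    ∫ v, g v ∂μ ≤ M * (μ.toSphere.real univ * (R ^ ((dim E : ℝ) - q) / (dim E - q))) +
      (∫ v, ‖v‖ ^ 2 * g v ∂μ) / R ^ 2 := by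
  have hw : Continuous fun v : E => (1 + ‖v‖) ^ (-q) :=
    (continuous_const.add continuous_norm).rpow_const fun v =>
      Or.inl (by positivity : (1 : ℝ) + ‖v‖ ≠ 0)
  rw [← integral_add_compl measurableSet_ball hg]
  gcongr ?_ + ?_
  · calc ∫ v in ball 0 R, g v ∂μ ≤ ∫ v in ball 0 R, M * (1 + ‖v‖) ^ (-q) ∂μ :=
          setIntegral_mono_of_nonneg (fun v _ => hg0 v) (fun v _ => hgM v)
            (((hw.continuousOn.integrableOn_compact (isCompact_closedBall 0 R)).mono_set
              ball_subset_closedBall).const_mul M)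
      _ ≤ _ := by
          rw [integral_const_mul]
          exact mul_le_mul_of_nonneg_left
            (setIntegral_ball_one_add_norm_rpow_neg_le μ hq0 hq hR) hM
  · exact setIntegral_compl_ball_le_div_sq hg0 hg2 hR

lemma integral_norm_sq_mul_le_of_le_mul_one_add_norm_rpow_neg (hq : dim E + 2 < q)
    (hR : 0 < R) (hg0 : 0 ≤ g) (hg : Integrable g μ) (hg2 : Integrable (fun v => ‖v‖ ^ 2 * g v) μ)
    (hM : 0 ≤ M) (hgM : ∀ v, g v ≤ M * (1 + ‖v‖) ^ (-q)) :
    ∫ v, ‖v‖ ^ 2 * g v ∂μ ≤ R ^ 2 * ∫ v, g v ∂μ +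
      M * (μ.toSphere.real univ * (R ^ ((dim E : ℝ) + 2 - q) / (q - dim E - 2))) := by
  have hw : Integrable (fun v : E => ‖v‖ ^ 2 * (1 + ‖v‖) ^ (-q)) μ := by
    refine (integrable_one_add_norm (r := q - 2) (by linarith)).mono' (by fun_prop)
      (.of_forall fun v => ?_)
    have h1 : (0 : ℝ) < 1 + ‖v‖ := by positivity
    rw [Real.norm_of_nonneg (by positivity), neg_sub, Real.rpow_sub h1, Real.rpow_neg h1.le,
      div_eq_mul_inv, Real.rpow_two]
    exact mul_le_mul_of_nonneg_right (by gcongr; linarith) (by positivity)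
  rw [← integral_add_compl measurableSet_ball hg2]
  gcongr ?_ + ?_
  · exact setIntegral_ball_norm_sq_mul_le hg0 hg
  · calc ∫ v in (ball 0 R)ᶜ, ‖v‖ ^ 2 * g v ∂μ
          ≤ ∫ v in (ball 0 R)ᶜ, M * (‖v‖ ^ 2 * (1 + ‖v‖) ^ (-q)) ∂μ :=
          setIntegral_mono_of_nonneg (fun v _ => mul_nonneg (by positivity) (hg0 v))
            (fun v _ => by
              rw [mul_left_comm]; exact mul_le_mul_of_nonneg_left (hgM v) (by positivity))
            (hw.const_mul M).integrableOn
      _ ≤ _ := by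
          rw [integral_const_mul]
          exact mul_le_mul_of_nonneg_left
            (setIntegral_compl_ball_norm_sq_mul_one_add_norm_rpow_neg_le μ hq hR) hM

theorem integral_mul_rpow_le_of_lt_finrank (hq0 : 0 ≤ q) (hq : q < dim E) (hg0 : 0 ≤ g)
    (hg : Integrable g μ) (hg2 : Integrable (fun v => ‖v‖ ^ 2 * g v) μ)
    (hρ : 0 < ∫ v, g v ∂μ) (hm2 : 0 < ∫ v, ‖v‖ ^ 2 * g v ∂μ) (hM : 0 ≤ M)
    (hgM : ∀ v, g v ≤ M * (1 + ‖v‖) ^ (-q)) :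
    (∫ v, g v ∂μ) * ((∫ v, ‖v‖ ^ 2 * g v ∂μ) / ∫ v, g v ∂μ) ^ ((q - dim E) / 2) ≤
      2 * 2 ^ ((dim E - q) / 2) * μ.toSphere.real univ / (dim E - q) * M := by
  have hm : 0 < (∫ v, ‖v‖ ^ 2 * g v ∂μ) / ∫ v, g v ∂μ := div_pos hm2 hρ
  have hbound := integral_le_of_le_mul_one_add_norm_rpow_neg hq0 hq
    (Real.sqrt_pos.2 (by positivity : 0 < 2 * ((∫ v, ‖v‖ ^ 2 * g v ∂μ) / ∫ v, g v ∂μ)))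
    hg0 hg hg2 hM hgM
  set ρ := ∫ v, g v ∂μ
  set m2 := ∫ v, ‖v‖ ^ 2 * g v ∂μ
  rw [← Real.rpow_div_two_eq_sqrt _ (by positivity), Real.sq_sqrt (by positivity),
    Real.mul_rpow zero_le_two hm.le, show m2 / (2 * (m2 / ρ)) = ρ / 2 by field_simp] at hbound
  rw [show ((q : ℝ) - dim E) / 2 = -((dim E - q) / 2) by ring, Real.rpow_neg hm.le,
    ← div_eq_mul_inv, div_le_iff₀ (Real.rpow_pos_of_pos hm _)]
  linear_combination 2 * hbound

theorem integral_mul_rpow_le_of_finrank_add_two_lt (hq : dim E + 2 < q) (hg0 : 0 ≤ g)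
    (hg : Integrable g μ) (hg2 : Integrable (fun v => ‖v‖ ^ 2 * g v) μ)
    (hρ : 0 < ∫ v, g v ∂μ) (hm2 : 0 < ∫ v, ‖v‖ ^ 2 * g v ∂μ) (hM : 0 ≤ M)
    (hgM : ∀ v, g v ≤ M * (1 + ‖v‖) ^ (-q)) :
    (∫ v, g v ∂μ) * ((∫ v, ‖v‖ ^ 2 * g v ∂μ) / ∫ v, g v ∂μ) ^ ((q - dim E) / 2) ≤
      2 ^ ((q - dim E) / 2) * μ.toSphere.real univ / (q - dim E - 2) * M := by
  have hx : 0 < (∫ v, ‖v‖ ^ 2 * g v ∂μ) / (∫ v, g v ∂μ) / 2 := by positivity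
  have hbound := integral_norm_sq_mul_le_of_le_mul_one_add_norm_rpow_neg hq
    (Real.sqrt_pos.2 hx) hg0 hg hg2 hM hgM
  set ρ := ∫ v, g v ∂μ
  set m2 := ∫ v, ‖v‖ ^ 2 * g v ∂μ
  set x := m2 / ρ / 2
  set e := ((q : ℝ) - dim E) / 2
  have hm2 : m2 = 2 * x * ρ := by simp only [x]; field_simp
  rw [← Real.rpow_div_two_eq_sqrt _ hx.le, Real.sq_sqrt hx.le,
    show ((dim E : ℝ) + 2 - q) / 2 = 1 - e by ring, Real.rpow_sub hx, Real.rpow_one, hm2] at hbound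
  have hxe : 0 < x ^ e := Real.rpow_pos_of_pos hx e
  have key : ρ * x ^ e ≤ μ.toSphere.real univ / (q - dim E - 2) * M := by
    calc ρ * x ^ e = (x * ρ) * (x ^ e / x) := by field_simp
      _ ≤ M * (μ.toSphere.real univ * (x / x ^ e / (q - dim E - 2))) * (x ^ e / x) := by
          exact mul_le_mul_of_nonneg_right (by linarith) (by positivity)
      _ = μ.toSphere.real univ / (q - dim E - 2) * M := by field_simp
  rw [show m2 / ρ = 2 * x by simp only [x]; ring, Real.mul_rpow zero_le_two hx.le]
  linear_combination 2 ^ e * key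

end WeightedBounds

section SecondMoment

variable {E : Type*} [NormedAddCommGroup E] [InnerProductSpace ℝ E]
  [SecondCountableTopology E] [MeasurableSpace E] [BorelSpace E] {μ : Measure E} {g : E → ℝ}

lemma MeasureTheory.Integrable.smul_self_of_norm_sq_mul (hg : Integrable g μ)
    (hg2 : Integrable (fun v => ‖v‖ ^ 2 * g v) μ) : Integrable (fun v => g v • v) μ := by
  refine (hg.norm.add hg2.norm).mono' (hg.aestronglyMeasurable.smul aestronglyMeasurable_id)
    (.of_forall fun v => ?_)
  change ‖g v • v‖ ≤ ‖g v‖ + ‖‖v‖ ^ 2 * g v‖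
  rw [norm_smul, norm_mul, norm_pow, norm_norm]
  nlinarith [norm_nonneg (g v), sq_nonneg (‖v‖ - 1)]

lemma integral_norm_sub_sq_mul [CompleteSpace E] (hg : Integrable g μ)
    (hg2 : Integrable (fun v => ‖v‖ ^ 2 * g v) μ) (c : E) :
    ∫ v, ‖v - c‖ ^ 2 * g v ∂μ =
      ∫ v, ‖v‖ ^ 2 * g v ∂μ - 2 * inner ℝ c (∫ v, g v • v ∂μ) + ‖c‖ ^ 2 * ∫ v, g v ∂μ := by
  have hgv := hg.smul_self_of_norm_sq_mul hg2
  have hexpand : (fun v => ‖v - c‖ ^ 2 * g v) =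
      fun v => ‖v‖ ^ 2 * g v - 2 * inner ℝ c (g v • v) + ‖c‖ ^ 2 * g v := by
    funext v
    rw [norm_sub_sq_real, inner_smul_right, real_inner_comm]
    ring
  have hcross : Integrable (fun v => 2 * inner ℝ c (g v • v)) μ :=
    (hgv.const_inner c).const_mul 2
  have hdiff : Integrable (fun v => ‖v‖ ^ 2 * g v - 2 * inner ℝ c (g v • v)) μ :=
    hg2.sub hcross
  rw [hexpand, integral_add hdiff (hg.const_mul _), integral_sub hg2 hcross, integral_const_mul,
    integral_const_mul, integral_inner hgv]

end SecondMoment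

lemma integral_norm_sq_mul_eq_dens_mul {g : E3 → ℝ} (hg : Integrable g)
    (hg2 : Integrable fun v => ‖v‖ ^ 2 * g v) (hρ : dens g ≠ 0) :
    ∫ v, ‖v‖ ^ 2 * g v = dens g * (3 * temp g + ‖bulk g‖ ^ 2) := by
  have hmean : ∫ v, g v • v = dens g • bulk g := by
    rw [bulk, smul_smul, mul_inv_cancel₀ hρ, one_smul]
  have htemp : ∫ v, ‖v - bulk g‖ ^ 2 * g v = 3 * dens g * temp g := by
    rw [temp, ← mul_assoc, mul_inv_cancel₀ (by positivity), one_mul]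
  have := integral_norm_sub_sq_mul hg hg2 (bulk g)
  rw [htemp, hmean, inner_smul_right, real_inner_self_eq_norm_sq] at this
  rw [dens] at this ⊢
  linear_combination -this

lemma ofReal_le_mul_Nq {q C x : ℝ} {g : E3 → ℝ} (hC : 0 < C)
    (h : ∀ M, 0 ≤ M → (∀ v, g v ≤ M * (1 + ‖v‖) ^ (-q)) → x ≤ C * M) :
    ENNReal.ofReal x ≤ ENNReal.ofReal C * Nq q g := by
  rcases eq_top_or_lt_top (Nq q g) with hN | hN
  · simp [hN, ENNReal.mul_top, hC]
  have hgM : ∀ v, g v ≤ (Nq q g).toReal * (1 + ‖v‖) ^ (-q) := fun v => by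
    have hv : (1 + ‖v‖) ^ q * g v ≤ (Nq q g).toReal :=
      (ENNReal.ofReal_le_iff_le_toReal hN.ne).1 <|
        le_iSup (fun v : E3 => ENNReal.ofReal ((1 + ‖v‖) ^ q * g v)) v
    rw [Real.rpow_neg (by positivity), ← div_eq_mul_inv, le_div_iff₀ (by positivity), mul_comm]
    exact hv
  calc ENNReal.ofReal x ≤ ENNReal.ofReal (C * (Nq q g).toReal) :=
        ENNReal.ofReal_le_ofReal (h _ ENNReal.toReal_nonneg hgM)
    _ = ENNReal.ofReal C * Nq q g := by
        rw [ENNReal.ofReal_mul hC.le, ENNReal.ofReal_toReal hN.ne]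

section VelocityMoments

variable {q M : ℝ} {g : E3 → ℝ}

lemma integral_norm_sq_mul_div_integral (hg : Integrable g)
    (hg2 : Integrable fun v => ‖v‖ ^ 2 * g v) (hρ : 0 < dens g) :
    (∫ v, ‖v‖ ^ 2 * g v) / (∫ v, g v) = 3 * temp g + ‖bulk g‖ ^ 2 := by
  rw [integral_norm_sq_mul_eq_dens_mul hg hg2 hρ.ne']
  exact mul_div_cancel_left₀ _ hρ.ne'

lemma dens_mul_rpow_le_of_lt_three (hq0 : 0 ≤ q) (hq3 : q < 3) (hg0 : 0 ≤ g) (hg : Integrable g)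
    (hg2 : Integrable fun v => ‖v‖ ^ 2 * g v) (hρ : 0 < dens g) (hT : 0 < temp g) (hM : 0 ≤ M)
    (hgM : ∀ v, g v ≤ M * (1 + ‖v‖) ^ (-q)) :
    dens g * (temp g + ‖bulk g‖ ^ 2) ^ ((q - 3) / 2) ≤
      3 ^ ((3 - q) / 2) *
        (2 * 2 ^ ((3 - q) / 2) * (volume : Measure E3).toSphere.real univ / (3 - q)) * M := by
  have hd : (dim E3 : ℝ) = 3 := by simp
  have hm2 : 0 < ∫ v, ‖v‖ ^ 2 * g v := by
    rw [integral_norm_sq_mul_eq_dens_mul hg hg2 hρ.ne']; positivity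
  have hmass := integral_mul_rpow_le_of_lt_finrank hq0 (hd ▸ hq3) hg0 hg hg2 hρ hm2 hM hgM
  rw [hd, integral_norm_sq_mul_div_integral hg hg2 hρ] at hmass
  have hcomp : (temp g + ‖bulk g‖ ^ 2) ^ ((q - 3) / 2) ≤
      3 ^ ((3 - q) / 2) * (3 * temp g + ‖bulk g‖ ^ 2) ^ ((q - 3) / 2) := by
    calc (temp g + ‖bulk g‖ ^ 2) ^ ((q - 3) / 2)
        ≤ ((3 * temp g + ‖bulk g‖ ^ 2) / 3) ^ ((q - 3) / 2) :=
          Real.rpow_le_rpow_of_nonpos (by positivity) (by nlinarith) (by linarith)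
      _ = 3 ^ ((3 - q) / 2) * (3 * temp g + ‖bulk g‖ ^ 2) ^ ((q - 3) / 2) := by
          rw [Real.div_rpow (by positivity) (by norm_num), div_eq_inv_mul,
            ← Real.rpow_neg (by norm_num), ← neg_div, neg_sub]
  calc dens g * (temp g + ‖bulk g‖ ^ 2) ^ ((q - 3) / 2)
      ≤ 3 ^ ((3 - q) / 2) * (dens g * (3 * temp g + ‖bulk g‖ ^ 2) ^ ((q - 3) / 2)) := by
        rw [mul_left_comm]; exact mul_le_mul_of_nonneg_left hcomp hρ.le
    _ ≤ _ := by rw [mul_assoc]; exact mul_le_mul_of_nonneg_left hmass (by positivity)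

lemma dens_mul_rpow_le_of_five_lt (hq5 : 5 < q) (hg0 : 0 ≤ g) (hg : Integrable g)
    (hg2 : Integrable fun v => ‖v‖ ^ 2 * g v) (hρ : 0 < dens g) (hT : 0 < temp g) (hM : 0 ≤ M)
    (hgM : ∀ v, g v ≤ M * (1 + ‖v‖) ^ (-q)) :
    dens g * (temp g + ‖bulk g‖ ^ 2) ^ ((q - 3) / 2) ≤
      2 ^ ((q - 3) / 2) * (volume : Measure E3).toSphere.real univ / (q - 5) * M := by
  have hd : (dim E3 : ℝ) = 3 := by simp
  have hm2 : 0 < ∫ v, ‖v‖ ^ 2 * g v := by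
    rw [integral_norm_sq_mul_eq_dens_mul hg hg2 hρ.ne']; positivity
  have hmass := integral_mul_rpow_le_of_finrank_add_two_lt (hd ▸ by linarith) hg0 hg hg2 hρ hm2
    hM hgM
  rw [hd, show q - 3 - 2 = q - 5 by ring, integral_norm_sq_mul_div_integral hg hg2 hρ] at hmass
  refine le_trans (mul_le_mul_of_nonneg_left ?_ hρ.le) hmass
  exact Real.rpow_le_rpow (by positivity) (by linarith) (by linarith)

end VelocityMoments

/-- Lemma 2.1, second inequality:
`ρ (T + |u|²)^{(q-3)/2} ≤ C_q N_q(g)` for `q > 5` or `0 ≤ q < 3`. -/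
theorem density_temp_velocity_lower_bound
    (q : ℝ) (hq : 5 < q ∨ (0 ≤ q ∧ q < 3)) :
    ∃ C > (0 : ℝ), ∀ g : E3 → ℝ,
      Measurable g → (∀ v, 0 ≤ g v) →
      Integrable g → 0 < dens g →
      Integrable (fun v => ‖v‖ ^ 2 * g v) → 0 < temp g →
      ENNReal.ofReal (dens g * (temp g + ‖bulk g‖ ^ 2) ^ ((q - 3) / 2)) ≤
        ENNReal.ofReal C * Nq q g := by
  have hκ := toSphere_real_univ_pos (volume : Measure E3)
  rcases hq with hq5 | ⟨hq0, hq3⟩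
  · have : 0 < q - 5 := by linarith
    exact ⟨_, by positivity, fun g _ hg0 hg hρ hg2 hT => ofReal_le_mul_Nq (by positivity)
      fun M hM hgM => dens_mul_rpow_le_of_five_lt hq5 hg0 hg hg2 hρ hT hM hgM⟩
  · have : 0 < 3 - q := by linarith
    exact ⟨_, by positivity, fun g _ hg0 hg hρ hg2 hT => ofReal_le_mul_Nq (by positivity)
      fun M hM hgM => dens_mul_rpow_le_of_lt_three hq0 hq3 hg0 hg hg2 hρ hT hM hgM⟩
end

section
/- Let ν ∈ (−1/2,1) and set C_{ν1} = min{1−ν, 1+2ν} and C_{ν2} = max{1−ν, 1+2ν}. Then for every nonnegative measurable g : ℝ³ → ℝ with 0 < ρ < ∞ and finite second moment ∫|v|²g(v)dv < ∞, the matrix inequalities C_{ν1}·T·Id ⪯ 𝒯_ν ⪯ C_{ν2}·T·Id hold in the sense of the positive semidefinite (Loewner) order on 3×3 symmetric matrices. -/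
open MeasureTheory Real Matrix ENNReal

/-!
Cauchy–Schwarz bounds the quadratic form of the stress tensor,
`xᵀΘx = ρ⁻¹ ∫ (x·(v-u))² g ≤ |x|² ρ⁻¹ ∫ |v-u|² g = 3T|x|²`, so `0 ⪯ Θ ⪯ 3T·Id`.
Since `𝒯_ν = (1-ν)T·Id + νΘ`, multiplying this sandwich by `ν` (reversing it when `ν < 0`)
places `𝒯_ν` between `(1-ν)T·Id` and `(1+2ν)T·Id`.
-/

open scoped MatrixOrder

section OrderedModule

variable {𝕜 M : Type*} [Ring 𝕜] [LinearOrder 𝕜] [IsOrderedRing 𝕜]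
  [AddCommGroup M] [PartialOrder M] [IsOrderedAddMonoid M] [Module 𝕜 M] [PosSMulMono 𝕜 M]
  {a s : M} {c : 𝕜}

lemma min_smul_le_add_smul (hc : 0 ≤ c) (hs : 0 ≤ s) (hsc : s ≤ c • a) (b ν : 𝕜) :
    min b (b + ν * c) • a ≤ b • a + ν • s := by
  rcases le_total 0 ν with hν | hν
  · rw [min_eq_left (le_add_of_nonneg_right (mul_nonneg hν hc))]
    exact le_add_of_nonneg_right (smul_nonneg hν hs)
  · rw [min_eq_right (add_le_of_nonpos_right (mul_nonpos_of_nonpos_of_nonneg hν hc)),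
      add_smul, mul_smul]
    exact add_le_add_right (smul_le_smul_of_nonpos_left hsc hν) _

lemma add_smul_le_max_smul (hc : 0 ≤ c) (hs : 0 ≤ s) (hsc : s ≤ c • a) (b ν : 𝕜) :
    b • a + ν • s ≤ max b (b + ν * c) • a := by
  rcases le_total 0 ν with hν | hν
  · rw [max_eq_right (le_add_of_nonneg_right (mul_nonneg hν hc)), add_smul, mul_smul]
    exact add_le_add_right (smul_le_smul_of_nonneg_left hsc hν) _
  · rw [max_eq_left (add_le_of_nonpos_right (mul_nonpos_of_nonpos_of_nonneg hν hc))]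
    exact add_le_of_nonpos_right (smul_nonpos_of_nonpos_of_nonneg hν hs)

end OrderedModule

lemma integrable_norm_sub_sq_mul {E : Type*} [NormedAddCommGroup E] [MeasurableSpace E]
    [OpensMeasurableSpace E] {μ : Measure E} {g : E → ℝ} (hint : Integrable g μ)
    (hmom : Integrable (fun v => ‖v‖ ^ 2 * g v) μ) (u : E) :
    Integrable (fun v => ‖v - u‖ ^ 2 * g v) μ := by
  refine ((hmom.norm.const_mul 2).add (hint.norm.const_mul (2 * ‖u‖ ^ 2))).mono'
    ((by fun_prop : Continuous fun v => ‖v - u‖ ^ 2).aestronglyMeasurable.mul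
      hint.aestronglyMeasurable)
    (.of_forall fun v => ?_)
  have hsq : ‖v - u‖ ^ 2 ≤ 2 * ‖v‖ ^ 2 + 2 * ‖u‖ ^ 2 := by
    nlinarith [norm_sub_le v u, norm_nonneg (v - u), sq_nonneg (‖v‖ - ‖u‖)]
  simp only [Pi.add_apply, norm_mul, norm_pow, norm_norm]
  nlinarith [mul_le_mul_of_nonneg_right hsq (norm_nonneg (g v))]

lemma integrable_apply_mul_apply_mul {ι : Type*} [Fintype ι] {μ : Measure (EuclideanSpace ℝ ι)}
    {g : EuclideanSpace ℝ ι → ℝ} (hg : AEStronglyMeasurable g μ) (u : EuclideanSpace ℝ ι)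
    (h : Integrable (fun v => ‖v - u‖ ^ 2 * g v) μ) (i j : ι) :
    Integrable (fun v => (v - u) i * (v - u) j * g v) μ := by
  refine h.norm.mono' ((by fun_prop : Continuous fun v : EuclideanSpace ℝ ι =>
    (v - u) i * (v - u) j).aestronglyMeasurable.mul hg) (.of_forall fun v => ?_)
  simp only [norm_mul, norm_norm, sq]
  gcongr <;> exact PiLp.norm_apply_le _ _

lemma integral_sum_mul_sq_mul {α ι : Type*} [MeasurableSpace α] [Fintype ι] {μ : Measure α}
    {f : ι → α → ℝ} {g : α → ℝ} (h : ∀ i j, Integrable (fun a => f i a * f j a * g a) μ)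
    (x : ι → ℝ) :
    ∫ a, (∑ i, x i * f i a) ^ 2 * g a ∂μ = ∑ i, ∑ j, x i * x j * ∫ a, f i a * f j a * g a ∂μ := by
  have hexpand : ∀ a, (∑ i, x i * f i a) ^ 2 * g a
      = ∑ i, ∑ j, x i * x j * (f i a * f j a * g a) := fun a => by
    rw [sq, Finset.sum_mul_sum, Finset.sum_mul]
    exact Finset.sum_congr rfl fun i _ => by
      rw [Finset.sum_mul]
      exact Finset.sum_congr rfl fun j _ => by ring
  simp_rw [hexpand]
  rw [integral_finsetSum _ fun i _ => integrable_finsetSum _ fun j _ => (h i j).const_mul _]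
  refine Finset.sum_congr rfl fun i _ => ?_
  rw [integral_finsetSum _ fun j _ => (h i j).const_mul _]
  simp_rw [integral_const_mul]

section Stress

lemma three_mul_temp (g : E3 → ℝ) :
    3 * temp g = (dens g)⁻¹ * ∫ v, ‖v - bulk g‖ ^ 2 * g v := by
  rw [temp, mul_inv]
  ring

lemma stress_isHermitian (g : E3 → ℝ) : (stress g).IsHermitian := by
  ext i j
  simp only [conjTranspose_apply, stress, of_apply, star_trivial]
  simp_rw [mul_comm ((_ - bulk g) j)]

variable {g : E3 → ℝ}

lemma dens_nonneg (hnn : ∀ v, 0 ≤ g v) : 0 ≤ dens g :=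
  integral_nonneg hnn

lemma dotProduct_stress_mulVec (hint : Integrable g) (hmom : Integrable fun v => ‖v‖ ^ 2 * g v)
    (x : Fin 3 → ℝ) :
    x ⬝ᵥ (stress g *ᵥ x) = (dens g)⁻¹ * ∫ v, (∑ i, x i * (v - bulk g) i) ^ 2 * g v := by
  rw [integral_sum_mul_sq_mul (integrable_apply_mul_apply_mul hint.aestronglyMeasurable _
    (integrable_norm_sub_sq_mul hint hmom _)) x]
  simp only [dotProduct, mulVec, stress, of_apply, Finset.mul_sum]
  exact Finset.sum_congr rfl fun i _ => Finset.sum_congr rfl fun j _ => by ring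

lemma stress_nonneg (hnn : ∀ v, 0 ≤ g v) (hint : Integrable g)
    (hmom : Integrable fun v => ‖v‖ ^ 2 * g v) : 0 ≤ stress g := by
  refine (PosSemidef.of_dotProduct_mulVec_nonneg (stress_isHermitian g) fun x => ?_).nonneg
  rw [star_trivial, dotProduct_stress_mulVec hint hmom]
  exact mul_nonneg (inv_nonneg.2 (dens_nonneg hnn))
    (integral_nonneg fun v => mul_nonneg (sq_nonneg _) (hnn v))

lemma stress_le_three_smul_temp (hnn : ∀ v, 0 ≤ g v) (hint : Integrable g)
    (hmom : Integrable fun v => ‖v‖ ^ 2 * g v) :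
    stress g ≤ (3 : ℝ) • temp g • (1 : Matrix (Fin 3) (Fin 3) ℝ) := by
  have hherm : ((3 : ℝ) • temp g • (1 : Matrix (Fin 3) (Fin 3) ℝ) - stress g).IsHermitian :=
    ((isHermitian_one.smul (.all _)).smul (.all _)).sub (stress_isHermitian g)
  refine PosSemidef.of_dotProduct_mulVec_nonneg hherm fun x => ?_
  have hcs : ∀ v : E3, (∑ i, x i * (v - bulk g) i) ^ 2 * g v
      ≤ ‖v - bulk g‖ ^ 2 * g v * (x ⬝ᵥ x) := fun v => by
    rw [EuclideanSpace.real_norm_sq_eq, mul_right_comm, mul_comm _ (x ⬝ᵥ x)]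
    refine mul_le_mul_of_nonneg_right ?_ (hnn v)
    simpa only [dotProduct, sq] using
      Finset.sum_mul_sq_le_sq_mul_sq _ x fun i => (v - bulk g) i
  have hquad : x ⬝ᵥ (stress g *ᵥ x) ≤ 3 * temp g * (x ⬝ᵥ x) := by
    rw [dotProduct_stress_mulVec hint hmom, three_mul_temp, mul_assoc, ← integral_mul_const]
    refine mul_le_mul_of_nonneg_left (integral_mono_of_nonneg (.of_forall fun v => ?_)
      ((integrable_norm_sub_sq_mul hint hmom _).mul_const _) (.of_forall hcs))
      (inv_nonneg.2 (dens_nonneg hnn))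
    exact mul_nonneg (sq_nonneg _) (hnn v)
  simp only [star_trivial, sub_mulVec, smul_mulVec, one_mulVec, dotProduct_sub, dotProduct_smul,
    smul_eq_mul]
  linarith

end Stress

theorem tempTensor_loewner_bounds_general
    (ν : ℝ)
    (g : E3 → ℝ) (hnn : ∀ v, 0 ≤ g v)
    (hint : Integrable g)
    (hmom : Integrable fun v => ‖v‖ ^ 2 * g v) :
    (tempTensor g ν -
      (min (1 - ν) (1 + 2 * ν) * temp g) • (1 : Matrix (Fin 3) (Fin 3) ℝ)).PosSemidef ∧
    ((max (1 - ν) (1 + 2 * ν) * temp g) • (1 : Matrix (Fin 3) (Fin 3) ℝ) -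
      tempTensor g ν).PosSemidef := by
  have hΘ₀ := stress_nonneg hnn hint hmom
  have hΘ := stress_le_three_smul_temp hnn hint hmom
  have hT : tempTensor g ν =
      (1 - ν) • temp g • (1 : Matrix (Fin 3) (Fin 3) ℝ) + ν • stress g := by
    rw [tempTensor, mul_smul]
  rw [hT, show 1 + 2 * ν = 1 - ν + ν * 3 by ring, mul_smul, mul_smul]
  exact ⟨min_smul_le_add_smul zero_le_three hΘ₀ hΘ _ _,
    add_smul_le_max_smul zero_le_three hΘ₀ hΘ _ _⟩

/-- Lemma 2.2: `C_{ν1} T Id ⪯ 𝒯_ν ⪯ C_{ν2} T Id` in the Loewner order. -/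
theorem tempTensor_loewner_bounds
    (ν : ℝ) (hν1 : -(1 / 2 : ℝ) < ν) (hν2 : ν < 1)
    (g : E3 → ℝ) (hmeas : Measurable g) (hnn : ∀ v, 0 ≤ g v)
    (hint : Integrable g) (hdens : 0 < dens g)
    (hmom : Integrable fun v => ‖v‖ ^ 2 * g v) :
    (tempTensor g ν -
      (min (1 - ν) (1 + 2 * ν) * temp g) • (1 : Matrix (Fin 3) (Fin 3) ℝ)).PosSemidef ∧
    ((max (1 - ν) (1 + 2 * ν) * temp g) • (1 : Matrix (Fin 3) (Fin 3) ℝ) -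
      tempTensor g ν).PosSemidef :=
  tempTensor_loewner_bounds_general ν g hnn hint hmom
end

section
/- There exists an absolute constant C > 0 such that for every measurable ρ₀ : ℝ³ → ℝ that is ℤ³-periodic with 0 ≤ ρ₀(x) for all x, every N > 0, every t > 0 and every x ∈ ℝ³: ∫_{ℝ³}(1+|v|²)·|ρ₀(x−vt) − 1|·μ(v)dv ≤ (1 + ∥ρ₀∥_{L∞})·∫_{{|v| ≥ N}}(1+|v|²)μ(v)dv + C·(1 + (Nt)³)·t^{−3}·∫_{[0,1]³}|ρ₀(y) − 1|dy. -/
/-!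
Split the velocity integral at `‖v‖ = N`. Where `‖v‖ ≥ N`, bound `|ρ₀ - 1|` by `1 + B`. Where
`‖v‖ < N`, the weight `(1 + ‖v‖²) μ(v)` is at most `1`, and the substitution `y = x - t v` turns
the integral into `t⁻³` times the integral of `|ρ₀ - 1|` over the ball of radius `N t` about `x`.
That ball is covered by at most `(2 N t + 2)³ ≤ 32 (1 + (N t)³)` integer translates of the unit
cube, and by periodicity the integral over each of them equals the one over `[0, 1]³`.
-/

open MeasureTheory Real Matrix ENNReal

section Maxwellian

lemma Mw_nonneg (v : E3) : 0 ≤ Mw v := by unfold Mw; positivity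

@[fun_prop]
lemma continuous_Mw : Continuous Mw := by unfold Mw; fun_prop

lemma one_add_sq_mul_Mw_le_exp (v : E3) :
    (1 + ‖v‖ ^ 2) * Mw v ≤ Real.exp (-(1 / 4) * ‖v‖ ^ 2) := by
  set s := ‖v‖ ^ 2
  have hconst : (2 * π) ^ (-(3 : ℝ) / 2) ≤ 4⁻¹ := by
    rw [neg_div, Real.rpow_neg (by positivity)]
    gcongr
    calc (4 : ℝ) ≤ (2 * π) ^ (1 : ℝ) := by rw [Real.rpow_one]; linarith [Real.pi_gt_three]
      _ ≤ (2 * π) ^ ((3 : ℝ) / 2) :=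
        Real.rpow_le_rpow_of_exponent_le (by linarith [Real.pi_gt_three]) (by norm_num)
  have hsplit : Real.exp (-(1 / 4) * s) = Real.exp (s / 4) * Real.exp (-s / 2) := by
    rw [← Real.exp_add]; ring_nf
  have hlin : (1 + s) * 4⁻¹ ≤ Real.exp (s / 4) := by linarith [Real.add_one_le_exp (s / 4)]
  calc (1 + s) * Mw v ≤ (1 + s) * 4⁻¹ * Real.exp (-s / 2) := by
        rw [mul_assoc]; unfold Mw; gcongr
    _ ≤ Real.exp (-(1 / 4) * s) := by rw [hsplit]; gcongr

lemma one_add_sq_mul_Mw_le_one (v : E3) : (1 + ‖v‖ ^ 2) * Mw v ≤ 1 :=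
  (one_add_sq_mul_Mw_le_exp v).trans (Real.exp_le_one_iff.2 (by nlinarith [sq_nonneg ‖v‖]))

lemma integrable_exp_neg_quarter_sq_norm :
    Integrable fun v : E3 => Real.exp (-(1 / 4) * ‖v‖ ^ 2) := by
  refine (GaussianFourier.integrable_cexp_neg_mul_sq_norm_add
    (b := (1 / 4 : ℂ)) (by norm_num) 0 (0 : E3)).norm.congr (.of_forall fun v => ?_)
  simp [Complex.norm_exp, ← Complex.ofReal_pow]

lemma integrable_one_add_sq_mul_Mw : Integrable fun v : E3 => (1 + ‖v‖ ^ 2) * Mw v :=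
  integrable_exp_neg_quarter_sq_norm.mono (by fun_prop) <| .of_forall fun v => by
    rw [Real.norm_of_nonneg (by have := Mw_nonneg v; positivity),
      Real.norm_of_nonneg (Real.exp_nonneg _)]
    exact one_add_sq_mul_Mw_le_exp v

end Maxwellian

section IntegerLattice

variable {n : ℕ}

def IsIntPeriodic {α : Type*} (f : EuclideanSpace ℝ (Fin n) → α) : Prop :=
  ∀ (x : EuclideanSpace ℝ (Fin n)) (k : Fin n → ℤ),
    f (x + (WithLp.equiv 2 (Fin n → ℝ)).symm fun i => (k i : ℝ)) = f x

def intCube (k : Fin n → ℤ) : Set (EuclideanSpace ℝ (Fin n)) :=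
  {y | ∀ i, y i ∈ Set.Icc (k i : ℝ) (k i + 1)}

lemma intCube_zero : intCube (0 : Fin n → ℤ) = {y | ∀ i, y i ∈ Set.Icc (0 : ℝ) 1} := by
  simp [intCube]

lemma measurableSet_intCube (k : Fin n → ℤ) : MeasurableSet (intCube k) := by
  simp only [intCube, Set.ofPred_forall]
  exact .iInter fun i => measurableSet_Icc.preimage (by fun_prop)

lemma preimage_add_intCube (k : Fin n → ℤ) :
    (· + (WithLp.equiv 2 (Fin n → ℝ)).symm fun i => (k i : ℝ)) ⁻¹' intCube k = intCube 0 := by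
  ext y
  simp [intCube, add_comm _ (1 : ℝ)]

lemma volume_intCube (k : Fin n → ℤ) : volume (intCube k) = 1 := by
  have : intCube k = WithLp.ofLp ⁻¹' Set.Icc (fun i => (k i : ℝ)) fun i => (k i : ℝ) + 1 := by
    ext y; simp [intCube, Set.mem_Icc, forall_and, Pi.le_def]
  rw [this, (PiLp.volume_preserving_ofLp (Fin n)).measure_preimage
    measurableSet_Icc.nullMeasurableSet, Real.volume_Icc_pi]
  simp

lemma IsIntPeriodic.setLIntegral_intCube {f : EuclideanSpace ℝ (Fin n) → ℝ≥0∞}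
    (hf : IsIntPeriodic f) (k : Fin n → ℤ) :
    ∫⁻ y in intCube k, f y = ∫⁻ y in intCube 0, f y := by
  set a := (WithLp.equiv 2 (Fin n → ℝ)).symm fun i => (k i : ℝ)
  rw [← (measurePreserving_add_right volume a).setLIntegral_comp_preimage_emb
    (measurableEmbedding_addRight a), preimage_add_intCube]
  exact setLIntegral_congr_fun (measurableSet_intCube 0) fun y _ => hf y k

lemma closedBall_subset_biUnion_intCube (x : EuclideanSpace ℝ (Fin n)) (r : ℝ) :
    Metric.closedBall x r ⊆
      ⋃ k ∈ Fintype.piFinset fun i => Finset.Icc ⌊x i - r⌋ ⌊x i + r⌋, intCube k := by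
  intro y hy
  have hcoord : ∀ i, |y i - x i| ≤ r := fun i =>
    (PiLp.norm_apply_le (y - x) i).trans (mem_closedBall_iff_norm.1 hy)
  refine Set.mem_biUnion (x := fun i => ⌊y i⌋) ?_ fun i =>
    ⟨Int.floor_le _, (Int.lt_floor_add_one _).le⟩
  simp only [Finset.mem_coe, Fintype.mem_piFinset, Finset.mem_Icc]
  exact fun i => ⟨Int.floor_le_floor (by linarith [(abs_le.1 (hcoord i)).1]),
    Int.floor_le_floor (by linarith [(abs_le.1 (hcoord i)).2])⟩

lemma Int.card_Icc_floor_le {a b : ℝ} (hab : a ≤ b) :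
    ((Finset.Icc ⌊a⌋ ⌊b⌋).card : ℝ) ≤ b - a + 2 := by
  have hfl : ⌊a⌋ ≤ ⌊b⌋ + 1 := by linarith [Int.floor_le_floor hab]
  rw [Int.card_Icc, ← Int.cast_natCast, Int.toNat_of_nonneg (by omega)]
  push_cast
  linarith [Int.floor_le b, Int.sub_one_lt_floor a]

lemma card_piFinset_Icc_floor_le (x : EuclideanSpace ℝ (Fin n)) {r : ℝ} (hr : 0 ≤ r) :
    ((Fintype.piFinset fun i => Finset.Icc ⌊x i - r⌋ ⌊x i + r⌋).card : ℝ) ≤ (2 * r + 2) ^ n := by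
  rw [Fintype.card_piFinset, Nat.cast_prod]
  calc ∏ i, ((Finset.Icc ⌊x i - r⌋ ⌊x i + r⌋).card : ℝ) ≤ ∏ _i : Fin n, (2 * r + 2) :=
        Finset.prod_le_prod (fun _ _ => Nat.cast_nonneg _) fun i _ =>
          (Int.card_Icc_floor_le (by linarith)).trans_eq (by ring)
    _ = (2 * r + 2) ^ n := by simp

lemma IsIntPeriodic.setLIntegral_closedBall_le {f : EuclideanSpace ℝ (Fin n) → ℝ≥0∞}
    (hf : IsIntPeriodic f) (x : EuclideanSpace ℝ (Fin n)) {r : ℝ} (hr : 0 ≤ r) :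
    ∫⁻ y in Metric.closedBall x r, f y ≤
      ENNReal.ofReal ((2 * r + 2) ^ n) * ∫⁻ y in intCube 0, f y := by
  set K := Fintype.piFinset fun i => Finset.Icc ⌊x i - r⌋ ⌊x i + r⌋
  calc ∫⁻ y in Metric.closedBall x r, f y ≤ ∫⁻ y in ⋃ k ∈ K, intCube k, f y :=
        lintegral_mono_set (closedBall_subset_biUnion_intCube x r)
    _ ≤ ∑ k ∈ K, ∫⁻ y in intCube k, f y := by
        rw [← Finset.set_biUnion_coe, Set.biUnion_eq_iUnion, ← Finset.tsum_subtype]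
        exact lintegral_iUnion_le _ _
    _ = K.card * ∫⁻ y in intCube 0, f y := by simp [hf.setLIntegral_intCube]
    _ ≤ ENNReal.ofReal ((2 * r + 2) ^ n) * ∫⁻ y in intCube 0, f y := by
        gcongr
        rw [← ENNReal.ofReal_natCast]
        exact ENNReal.ofReal_le_ofReal (card_piFinset_Icc_floor_le x hr)

end IntegerLattice

section Dilation

variable {E : Type*} [NormedAddCommGroup E] [NormedSpace ℝ E] [MeasurableSpace E] [BorelSpace E]
  [FiniteDimensional ℝ E] (μ : Measure E) [μ.IsAddHaarMeasure]

lemma lintegral_comp_smul (f : E → ℝ≥0∞) {R : ℝ} (hR : R ≠ 0) :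
    ∫⁻ x, f (R • x) ∂μ = ENNReal.ofReal |(R ^ Module.finrank ℝ E)⁻¹| * ∫⁻ x, f x ∂μ := by
  calc ∫⁻ x, f (R • x) ∂μ = ∫⁻ y, f y ∂μ.map (R • ·) :=
        (lintegral_map_equiv f
          (Homeomorph.smul (isUnit_iff_ne_zero.2 hR).unit).toMeasurableEquiv).symm
    _ = _ := by rw [Measure.map_addHaar_smul μ hR, lintegral_smul_measure, smul_eq_mul]

lemma setLIntegral_closedBall_comp_sub_smul (f : E → ℝ≥0∞) (x : E) {t : ℝ} (ht : 0 < t) (N : ℝ) :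
    ∫⁻ v in Metric.closedBall 0 N, f (x - t • v) ∂μ =
      ENNReal.ofReal (t ^ Module.finrank ℝ E)⁻¹ * ∫⁻ y in Metric.closedBall x (N * t), f y ∂μ := by
  set g := (Metric.closedBall x (N * t)).indicator f
  have hg (v : E) :
      g (x + (-t) • v) = (Metric.closedBall 0 N).indicator (fun v => f (x - t • v)) v := by
    rw [neg_smul, ← sub_eq_add_neg]
    have hmem : x - t • v ∈ Metric.closedBall x (N * t) ↔ v ∈ Metric.closedBall 0 N := by
      simp [norm_smul, abs_of_pos ht, mul_comm t, mul_le_mul_iff_left₀ ht]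
    by_cases hv : v ∈ Metric.closedBall 0 N
    · simp only [g, Set.indicator_of_mem hv, Set.indicator_of_mem (hmem.2 hv)]
    · simp only [g, Set.indicator_of_notMem hv, Set.indicator_of_notMem (mt hmem.1 hv)]
  calc ∫⁻ v in Metric.closedBall 0 N, f (x - t • v) ∂μ = ∫⁻ v, g (x + (-t) • v) ∂μ := by
        simp only [hg, lintegral_indicator measurableSet_closedBall]
    _ = ENNReal.ofReal (t ^ Module.finrank ℝ E)⁻¹ * ∫⁻ w, g (x + w) ∂μ := by
        rw [lintegral_comp_smul μ (fun w => g (x + w)) (neg_ne_zero.2 ht.ne'),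
          abs_inv, abs_pow, abs_neg, abs_of_pos ht]
    _ = _ := by
        rw [lintegral_add_left_eq_self, lintegral_indicator measurableSet_closedBall]

end Dilation

section VelocityIntegrals

lemma integrable_one_add_sq_mul_mul_Mw {φ : E3 → ℝ} (hφ : AEStronglyMeasurable φ) {M : ℝ}
    (hφM : ∀ v, |φ v| ≤ M) : Integrable fun v => (1 + ‖v‖ ^ 2) * φ v * Mw v :=
  (integrable_one_add_sq_mul_Mw.bdd_mul hφ (.of_forall hφM)).congr (.of_forall fun v => by ring)

lemma setIntegral_one_add_sq_mul_mul_Mw_le {φ : E3 → ℝ} (hφ : AEStronglyMeasurable φ) {M : ℝ}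
    (hφM : ∀ v, |φ v| ≤ M) (s : Set E3) :
    ∫ v in s, (1 + ‖v‖ ^ 2) * φ v * Mw v ≤ M * ∫ v in s, (1 + ‖v‖ ^ 2) * Mw v := by
  rw [← integral_const_mul]
  refine setIntegral_mono (integrable_one_add_sq_mul_mul_Mw hφ hφM).integrableOn
    (integrable_one_add_sq_mul_Mw.const_mul M).integrableOn fun v => ?_
  have := (le_abs_self (φ v)).trans (hφM v)
  have : 0 ≤ (1 + ‖v‖ ^ 2) * Mw v := by have := Mw_nonneg v; positivity
  nlinarith

lemma IsIntPeriodic.setIntegral_one_add_sq_mul_comp_mul_Mw_le {g : E3 → ℝ} (hg : Measurable g)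
    (hg0 : ∀ y, 0 ≤ g y) (hper : IsIntPeriodic g) (hgQ : IntegrableOn g (intCube 0))
    (x : E3) {t : ℝ} (ht : 0 < t) {N : ℝ} (hN : 0 ≤ N) {s : Set E3}
    (hs : s ⊆ Metric.closedBall 0 N) :
    ∫ v in s, (1 + ‖v‖ ^ 2) * g (x - t • v) * Mw v ≤
      (2 * (N * t) + 2) ^ 3 / t ^ 3 * ∫ y in intCube 0, g y := by
  have hQ : ∫⁻ y in intCube 0, ENNReal.ofReal (g y) = ENNReal.ofReal (∫ y in intCube 0, g y) :=
    (ofReal_integral_eq_lintegral_ofReal hgQ (.of_forall hg0)).symm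
  have hper' : IsIntPeriodic fun y => ENNReal.ofReal (g y) := fun y k =>
    congrArg ENNReal.ofReal (hper y k)
  have hle (v : E3) : (1 + ‖v‖ ^ 2) * g (x - t • v) * Mw v ≤ g (x - t • v) := by
    nlinarith [one_add_sq_mul_Mw_le_one v, hg0 (x - t • v)]
  have hQ0 : 0 ≤ ∫ y in intCube 0, g y :=
    setIntegral_nonneg (measurableSet_intCube 0) fun y _ => hg0 y
  have hnonneg (v : E3) : 0 ≤ (1 + ‖v‖ ^ 2) * g (x - t • v) * Mw v := by
    have := hg0 (x - t • v); have := Mw_nonneg v; positivity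
  rw [integral_eq_lintegral_of_nonneg_ae (.of_forall hnonneg) (by fun_prop)]
  refine ENNReal.toReal_le_of_le_ofReal (by positivity) ?_
  calc ∫⁻ v in s, ENNReal.ofReal ((1 + ‖v‖ ^ 2) * g (x - t • v) * Mw v)
      ≤ ∫⁻ v in Metric.closedBall 0 N, ENNReal.ofReal (g (x - t • v)) :=
        (lintegral_mono fun v => ENNReal.ofReal_le_ofReal (hle v)).trans (lintegral_mono_set hs)
    _ = ENNReal.ofReal (t ^ 3)⁻¹ * ∫⁻ y in Metric.closedBall x (N * t), ENNReal.ofReal (g y) := by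
        rw [setLIntegral_closedBall_comp_sub_smul volume (fun y => ENNReal.ofReal (g y)) x ht N,
          finrank_euclideanSpace_fin]
    _ ≤ ENNReal.ofReal (t ^ 3)⁻¹ *
          (ENNReal.ofReal ((2 * (N * t) + 2) ^ 3) * ∫⁻ y in intCube 0, ENNReal.ofReal (g y)) := by
        gcongr
        exact hper'.setLIntegral_closedBall_le x (by positivity)
    _ = _ := by
        rw [hQ, ← ENNReal.ofReal_mul (by positivity), ← ENNReal.ofReal_mul (by positivity)]
        ring_nf

end VelocityIntegrals

/-- torus case `Ω = 𝕋³`: decay of the free transport of `ρ₀ - 1` for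
`ℤ³`-periodic data. -/
theorem free_transport_decay_T3 :
    ∃ C > (0 : ℝ), ∀ ρ₀ : E3 → ℝ,
      Measurable ρ₀ → (∀ x, 0 ≤ ρ₀ x) →
      (∀ (x : E3) (k : Fin 3 → ℤ),
        ρ₀ (x + (WithLp.equiv 2 (Fin 3 → ℝ)).symm fun i => (k i : ℝ)) = ρ₀ x) →
      ∀ B : ℝ, (∀ x, ρ₀ x ≤ B) →
      ∀ N : ℝ, 0 < N → ∀ t : ℝ, 0 < t → ∀ x : E3,
        ∫ v, (1 + ‖v‖ ^ 2) * |ρ₀ (x - t • v) - 1| * Mw v ≤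
          (1 + B) * (∫ v in {v : E3 | N ≤ ‖v‖}, (1 + ‖v‖ ^ 2) * Mw v)
            + C * (1 + (N * t) ^ 3) / t ^ 3 *
              ∫ y in {y : E3 | ∀ i, y i ∈ Set.Icc (0 : ℝ) 1}, |ρ₀ y - 1| := by
  refine ⟨32, by norm_num, fun ρ₀ hmeas hpos hper B hB N hN t ht x => ?_⟩
  set g : E3 → ℝ := fun y => |ρ₀ y - 1|
  have hg_meas : Measurable g := (hmeas.sub_const 1).abs
  have hg_le (y : E3) : |g y| ≤ 1 + B := by
    rw [abs_abs]; exact abs_le.2 ⟨by linarith [hpos y, hB 0, hpos 0], by linarith [hB y]⟩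
  have hg_per : IsIntPeriodic g := fun y k => by simp only [g, hper y k]
  have hgQ : IntegrableOn g (intCube 0) :=
    Measure.integrableOn_of_bounded (by simp [volume_intCube]) hg_meas.aestronglyMeasurable
      (.of_forall hg_le)
  have hφ : AEStronglyMeasurable fun v => g (x - t • v) :=
    (hg_meas.comp (by fun_prop)).aestronglyMeasurable
  have hS : MeasurableSet {v : E3 | N ≤ ‖v‖} := measurableSet_le measurable_const measurable_norm
  have hSc : {v : E3 | N ≤ ‖v‖}ᶜ ⊆ Metric.closedBall 0 N := fun v hv =>
    mem_closedBall_zero_iff.2 (not_le.1 (show ¬N ≤ ‖v‖ from hv)).le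
  have h_tail := setIntegral_one_add_sq_mul_mul_Mw_le hφ (fun v => hg_le _) {v : E3 | N ≤ ‖v‖}
  have h_core := hg_per.setIntegral_one_add_sq_mul_comp_mul_Mw_le hg_meas (fun y => abs_nonneg _)
    hgQ x ht hN.le hSc
  have h_const : (2 * (N * t) + 2) ^ 3 / t ^ 3 ≤ 32 * (1 + (N * t) ^ 3) / t ^ 3 := by
    have := mul_pos hN ht
    gcongr
    nlinarith [sq_nonneg (N * t - 1)]
  have hQ0 : 0 ≤ ∫ y in intCube 0, g y :=
    setIntegral_nonneg (measurableSet_intCube 0) fun y _ => abs_nonneg _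
  rw [← integral_add_compl hS (integrable_one_add_sq_mul_mul_Mw hφ fun v => hg_le _),
    ← intCube_zero]
  exact add_le_add h_tail (h_core.trans (mul_le_mul_of_nonneg_right h_const hQ0))
end

section
/- Let ρ₀ : ℝ³ → ℝ be measurable and nonnegative with ρ₀ − 1 ∈ L¹(ℝ³) and ρ₀lnρ₀ − ρ₀ + 1 ∈ L¹(ℝ³) (with the convention 0·ln 0 = 0), and set F₀(x,v) = ρ₀(x)μ(v). Then F₀lnF₀ − μlnμ, F₀ − μ and |v|²(F₀ − μ) are integrable on ℝ³×ℝ³ and ℰ(F₀) = ∫_{ℝ³}(ρ₀(x)·ln ρ₀(x) − ρ₀(x) + 1)dx. -/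
open MeasureTheory Real Matrix ENNReal

/-!
The identity `ab log (ab) - b log b = (a log a - a + 1) b + (a - 1) (b log b + b)`, valid for all
real `a, b`, splits each integrand of `ℰ(ρ₀ μ)` into products `f(x) g(v)` with `f` one of the integrable functions `ρ₀ log ρ₀ - ρ₀ + 1`, `ρ₀ - 1`, so Fubini applies. Since
`μ log μ = -(3/2) log (2π) μ - |v|² μ / 2`, the Gaussian moments `∫ μ = 1` and `∫ |v|² μ = 3` make
every term carrying `∫ (ρ₀ - 1)` cancel. The second moment is computed coordinatewise from the
variance of the standard normal law.
-/

lemma integrable_exp_neg_sq_div_two : Integrable fun x : ℝ => exp (-x ^ 2 / 2) := by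
  simpa [neg_div, div_eq_inv_mul] using integrable_exp_neg_mul_sq (b := 1 / 2) (by norm_num)

lemma integral_exp_neg_sq_div_two : ∫ x : ℝ, exp (-x ^ 2 / 2) = √(2 * π) := by
  simpa [neg_div, div_eq_inv_mul, mul_comm] using integral_gaussian (1 / 2)

lemma integrable_sq_mul_exp_neg_sq_div_two :
    Integrable fun x : ℝ => x ^ 2 * exp (-x ^ 2 / 2) := by
  simpa [neg_div, div_eq_inv_mul] using
    integrable_rpow_mul_exp_neg_mul_sq (b := 1 / 2) (s := 2) (by norm_num) (by norm_num)

open ProbabilityTheory in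
lemma integral_sq_mul_exp_neg_sq_div_two : ∫ x : ℝ, x ^ 2 * exp (-x ^ 2 / 2) = √(2 * π) := by
  have hvar : ∫ x, x ^ 2 ∂gaussianReal 0 1 = 1 := by
    rw [← variance_of_integral_eq_zero (X := fun x => x) measurable_id'.aemeasurable (by simp)]
    simp
  have hpdf (x : ℝ) : gaussianPDFReal 0 1 x = (√(2 * π))⁻¹ * exp (-x ^ 2 / 2) := by
    simp [gaussianPDFReal]
  calc ∫ x : ℝ, x ^ 2 * exp (-x ^ 2 / 2)
      = √(2 * π) * ∫ x, gaussianPDFReal 0 1 x • x ^ 2 := by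
        rw [← integral_const_mul]
        congr with x
        rw [hpdf, smul_eq_mul]
        field_simp
    _ = √(2 * π) := by rw [← integral_gaussianReal_eq_integral_smul one_ne_zero, hvar, mul_one]

section EuclideanGaussian

variable {ι : Type*} [Fintype ι]

lemma exp_neg_norm_sq_div_two_toLp (y : ι → ℝ) :
    exp (-‖WithLp.toLp 2 y‖ ^ 2 / 2) = ∏ i, exp (-y i ^ 2 / 2) := by
  rw [EuclideanSpace.real_norm_sq_eq, ← exp_sum, ← Finset.sum_neg_distrib, Finset.sum_div]

lemma norm_sq_mul_exp_neg_norm_sq_div_two_toLp [DecidableEq ι] (y : ι → ℝ) :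
    ‖WithLp.toLp 2 y‖ ^ 2 * exp (-‖WithLp.toLp 2 y‖ ^ 2 / 2) =
      ∑ i, ∏ j, (if j = i then y j ^ 2 else 1) * exp (-y j ^ 2 / 2) := by
  simp_rw [Finset.prod_mul_distrib, Finset.prod_ite_eq', Finset.mem_univ, if_true,
    ← exp_neg_norm_sq_div_two_toLp, ← Finset.sum_mul, ← EuclideanSpace.real_norm_sq_eq]

lemma integrable_ite_sq_mul_exp_neg_sq_div_two (p : Prop) [Decidable p] :
    Integrable fun x : ℝ => (if p then x ^ 2 else 1) * exp (-x ^ 2 / 2) := by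
  split_ifs
  · exact integrable_sq_mul_exp_neg_sq_div_two
  · simpa using integrable_exp_neg_sq_div_two

lemma integral_ite_sq_mul_exp_neg_sq_div_two (p : Prop) [Decidable p] :
    ∫ x : ℝ, (if p then x ^ 2 else 1) * exp (-x ^ 2 / 2) = √(2 * π) := by
  split_ifs
  · exact integral_sq_mul_exp_neg_sq_div_two
  · simpa using integral_exp_neg_sq_div_two

lemma integrable_comp_toLp_iff {F : Type*} [NormedAddCommGroup F] {f : EuclideanSpace ℝ ι → F} :
    Integrable (fun y : ι → ℝ => f (WithLp.toLp 2 y)) ↔ Integrable f :=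
  (PiLp.volume_preserving_toLp ι).integrable_comp_emb
    (MeasurableEquiv.toLp 2 _).measurableEmbedding

lemma integral_comp_toLp {F : Type*} [NormedAddCommGroup F] [NormedSpace ℝ F]
    (f : EuclideanSpace ℝ ι → F) :
    ∫ y : ι → ℝ, f (WithLp.toLp 2 y) = ∫ v, f v :=
  (PiLp.volume_preserving_toLp ι).integral_comp
    (MeasurableEquiv.toLp 2 _).measurableEmbedding f

lemma integrable_exp_neg_norm_sq_div_two :
    Integrable fun v : EuclideanSpace ℝ ι => exp (-‖v‖ ^ 2 / 2) := by
  rw [← integrable_comp_toLp_iff]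
  simp_rw [exp_neg_norm_sq_div_two_toLp]
  exact Integrable.fintype_prod fun _ => integrable_exp_neg_sq_div_two

lemma integral_exp_neg_norm_sq_div_two :
    ∫ v : EuclideanSpace ℝ ι, exp (-‖v‖ ^ 2 / 2) = √(2 * π) ^ Fintype.card ι := by
  rw [← integral_comp_toLp]
  simp_rw [exp_neg_norm_sq_div_two_toLp]
  rw [integral_fintype_prod_volume_eq_prod (f := fun _ x => exp (-x ^ 2 / 2))]
  simp [integral_exp_neg_sq_div_two]

lemma integrable_prod_ite_sq_mul_exp_neg_sq_div_two [DecidableEq ι] (i : ι) :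
    Integrable fun y : ι → ℝ => ∏ j, (if j = i then y j ^ 2 else 1) * exp (-y j ^ 2 / 2) :=
  Integrable.fintype_prod fun j => integrable_ite_sq_mul_exp_neg_sq_div_two (j = i)

lemma integrable_norm_sq_mul_exp_neg_norm_sq_div_two :
    Integrable fun v : EuclideanSpace ℝ ι => ‖v‖ ^ 2 * exp (-‖v‖ ^ 2 / 2) := by
  classical
  rw [← integrable_comp_toLp_iff]
  simp_rw [norm_sq_mul_exp_neg_norm_sq_div_two_toLp]
  exact integrable_finsetSum _ fun i _ => integrable_prod_ite_sq_mul_exp_neg_sq_div_two i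

lemma integral_norm_sq_mul_exp_neg_norm_sq_div_two :
    ∫ v : EuclideanSpace ℝ ι, ‖v‖ ^ 2 * exp (-‖v‖ ^ 2 / 2) =
      Fintype.card ι * √(2 * π) ^ Fintype.card ι := by
  classical
  rw [← integral_comp_toLp]
  simp_rw [norm_sq_mul_exp_neg_norm_sq_div_two_toLp]
  rw [integral_finsetSum _ fun i _ => integrable_prod_ite_sq_mul_exp_neg_sq_div_two i]
  have hfactor (i : ι) : ∫ y : ι → ℝ, ∏ j, (if j = i then y j ^ 2 else 1) * exp (-y j ^ 2 / 2) =
      √(2 * π) ^ Fintype.card ι := by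
    rw [integral_fintype_prod_volume_eq_prod
      (fun j x => (if j = i then x ^ 2 else 1) * exp (-x ^ 2 / 2))]
    simp only [integral_ite_sq_mul_exp_neg_sq_div_two, Finset.prod_const, Finset.card_univ]
  rw [Finset.sum_congr rfl fun i _ => hfactor i, Finset.sum_const, Finset.card_univ, nsmul_eq_mul]

end EuclideanGaussian

lemma Mw_mul_log_Mw (v : E3) :
    Mw v * log (Mw v) = -(3 / 2) * Real.log (2 * π) * Mw v - 1 / 2 * (‖v‖ ^ 2 * Mw v) := by
  have hlog : log (Mw v) = -(3 / 2) * Real.log (2 * π) - ‖v‖ ^ 2 / 2 := by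
    rw [Mw, log_mul (by positivity) (exp_pos _).ne', log_rpow two_pi_pos, log_exp]
    ring
  rw [hlog]
  ring

lemma rpow_neg_three_halves_mul_sqrt_pow_three {x : ℝ} (hx : 0 < x) :
    x ^ (-(3 : ℝ) / 2) * √x ^ 3 = 1 := by
  rw [sqrt_eq_rpow, ← Real.rpow_natCast, ← rpow_mul hx.le, ← rpow_add hx]
  norm_num

lemma integrable_Mw : Integrable Mw :=
  integrable_exp_neg_norm_sq_div_two.const_mul _

lemma integral_Mw : ∫ v, Mw v = 1 := by
  simp only [Mw, integral_const_mul, integral_exp_neg_norm_sq_div_two, Fintype.card_fin]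
  exact rpow_neg_three_halves_mul_sqrt_pow_three two_pi_pos

lemma norm_sq_mul_Mw (v : E3) :
    ‖v‖ ^ 2 * Mw v = (2 * π) ^ (-(3 : ℝ) / 2) * (‖v‖ ^ 2 * exp (-‖v‖ ^ 2 / 2)) :=
  mul_left_comm _ _ _

lemma integrable_norm_sq_mul_Mw : Integrable fun v => ‖v‖ ^ 2 * Mw v := by
  simp_rw [norm_sq_mul_Mw]
  exact integrable_norm_sq_mul_exp_neg_norm_sq_div_two.const_mul _

lemma integral_norm_sq_mul_Mw : ∫ v, ‖v‖ ^ 2 * Mw v = 3 := by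
  simp_rw [norm_sq_mul_Mw]
  rw [integral_const_mul, integral_norm_sq_mul_exp_neg_norm_sq_div_two, Fintype.card_fin,
    mul_left_comm, rpow_neg_three_halves_mul_sqrt_pow_three two_pi_pos]
  norm_num

lemma integrable_Mw_mul_log_Mw : Integrable fun v => Mw v * log (Mw v) := by
  simp_rw [Mw_mul_log_Mw]
  exact (integrable_Mw.const_mul _).sub (integrable_norm_sq_mul_Mw.const_mul _)

lemma integral_Mw_mul_log_Mw : ∫ v, Mw v * log (Mw v) = -(3 / 2) * Real.log (2 * π) - 3 / 2 := by
  simp_rw [Mw_mul_log_Mw]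
  rw [integral_sub (integrable_Mw.const_mul _) (integrable_norm_sq_mul_Mw.const_mul _),
    integral_const_mul, integral_const_mul, integral_Mw, integral_norm_sq_mul_Mw]
  ring

lemma mul_log_mul_sub_mul_log (a b : ℝ) :
    a * b * log (a * b) - b * log b = (a * log a - a + 1) * b + (a - 1) * (b * log b + b) := by
  rcases eq_or_ne a 0 with rfl | ha
  · ring
  rcases eq_or_ne b 0 with rfl | hb
  · ring
  rw [log_mul ha hb]
  ring

section RelativeEntropyProd

variable {X V : Type*} [MeasurableSpace X] [MeasurableSpace V] {μ : Measure X} {ν : Measure V}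
  {ρ : X → ℝ} {M : V → ℝ}

lemma integrable_mul_log_mul_sub_prod (h1 : Integrable (fun x => ρ x - 1) μ)
    (h2 : Integrable (fun x => ρ x * log (ρ x) - ρ x + 1) μ) (hM : Integrable M ν)
    (hMlog : Integrable (fun v => M v * log (M v)) ν) :
    Integrable (fun p : X × V => ρ p.1 * M p.2 * log (ρ p.1 * M p.2) - M p.2 * log (M p.2))
      (μ.prod ν) := by
  simp_rw [mul_log_mul_sub_mul_log]
  exact (h2.mul_prod hM).add (h1.mul_prod (hMlog.add hM))

lemma integral_mul_log_mul_sub_prod [SFinite μ] [SFinite ν] (h1 : Integrable (fun x => ρ x - 1) μ)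
    (h2 : Integrable (fun x => ρ x * log (ρ x) - ρ x + 1) μ) (hM : Integrable M ν)
    (hMlog : Integrable (fun v => M v * log (M v)) ν) :
    ∫ p : X × V, ρ p.1 * M p.2 * log (ρ p.1 * M p.2) - M p.2 * log (M p.2) ∂μ.prod ν =
      (∫ x, ρ x * log (ρ x) - ρ x + 1 ∂μ) * (∫ v, M v ∂ν) +
        (∫ x, ρ x - 1 ∂μ) * ((∫ v, M v * log (M v) ∂ν) + ∫ v, M v ∂ν) := by
  have hMlogM : Integrable (fun v => M v * log (M v) + M v) ν := hMlog.add hM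
  simp_rw [mul_log_mul_sub_mul_log]
  rw [integral_add (h2.mul_prod hM) (h1.mul_prod hMlogM),
    integral_prod_mul (fun x => ρ x * log (ρ x) - ρ x + 1) M,
    integral_prod_mul (fun x => ρ x - 1) fun v => M v * log (M v) + M v, integral_add hMlog hM]

end RelativeEntropyProd

theorem entE_of_local_maxwellian_general
    (ρ₀ : E3 → ℝ)
    (h1 : Integrable (fun x => ρ₀ x - 1))
    (h2 : Integrable (fun x => ρ₀ x * Real.log (ρ₀ x) - ρ₀ x + 1)) :
    Integrable (fun p : E3 × E3 =>
      ρ₀ p.1 * Mw p.2 * Real.log (ρ₀ p.1 * Mw p.2) - Mw p.2 * Real.log (Mw p.2)) ∧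
    Integrable (fun p : E3 × E3 => ρ₀ p.1 * Mw p.2 - Mw p.2) ∧
    Integrable (fun p : E3 × E3 => ‖p.2‖ ^ 2 * (ρ₀ p.1 * Mw p.2 - Mw p.2)) ∧
    entE (fun x v => ρ₀ x * Mw v) = ∫ x, (ρ₀ x * Real.log (ρ₀ x) - ρ₀ x + 1) := by
  have hlin : (fun p : E3 × E3 => ρ₀ p.1 * Mw p.2 - Mw p.2) = fun p => (ρ₀ p.1 - 1) * Mw p.2 := by
    ext; ring
  have hquad : (fun p : E3 × E3 => ‖p.2‖ ^ 2 * (ρ₀ p.1 * Mw p.2 - Mw p.2)) =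
      fun p => (ρ₀ p.1 - 1) * (‖p.2‖ ^ 2 * Mw p.2) := by
    ext; ring
  simp only [entE, hlin, hquad, Measure.volume_eq_prod]
  refine ⟨integrable_mul_log_mul_sub_prod h1 h2 integrable_Mw integrable_Mw_mul_log_Mw,
    h1.mul_prod integrable_Mw, h1.mul_prod integrable_norm_sq_mul_Mw, ?_⟩
  rw [integral_mul_log_mul_sub_prod h1 h2 integrable_Mw integrable_Mw_mul_log_Mw,
    integral_prod_mul (fun x => ρ₀ x - 1) Mw,
    integral_prod_mul (fun x => ρ₀ x - 1) fun v => ‖v‖ ^ 2 * Mw v, integral_Mw,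
    integral_norm_sq_mul_Mw, integral_Mw_mul_log_Mw]
  ring

/-- for `F₀(x,v) = ρ₀(x)μ(v)` the entropy functional reduces to
`ℰ(F₀) = ∫ (ρ₀ ln ρ₀ - ρ₀ + 1) dx`. -/
theorem entE_of_local_maxwellian
    (ρ₀ : E3 → ℝ) (hmeas : Measurable ρ₀) (hnn : ∀ x, 0 ≤ ρ₀ x)
    (h1 : Integrable (fun x => ρ₀ x - 1))
    (h2 : Integrable (fun x => ρ₀ x * Real.log (ρ₀ x) - ρ₀ x + 1)) :
    Integrable (fun p : E3 × E3 =>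
      ρ₀ p.1 * Mw p.2 * Real.log (ρ₀ p.1 * Mw p.2) - Mw p.2 * Real.log (Mw p.2)) ∧
    Integrable (fun p : E3 × E3 => ρ₀ p.1 * Mw p.2 - Mw p.2) ∧
    Integrable (fun p : E3 × E3 => ‖p.2‖ ^ 2 * (ρ₀ p.1 * Mw p.2 - Mw p.2)) ∧
    entE (fun x v => ρ₀ x * Mw v) = ∫ x, (ρ₀ x * Real.log (ρ₀ x) - ρ₀ x + 1) :=
  entE_of_local_maxwellian_general ρ₀ h1 h2
end
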